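/- Fix x_u, x_v ∈ [0,1] with x = d_L(x_u, x_v), let 0 ≤ r_d ≤ r_s with r_s > 2r_d, x ≤ r_d and 2r_s ≤ 1, and let Z_1, …, Z_{m₁} and W_1, …, W_{m₂} be i.i.d. uniform on [0,1]. Then the count #{i ≤ m₁ : d_L(Z_i, x_u) > r_s and d_L(Z_i, x_v) > r_d} + #{j ≤ m₂ : d_L(W_j, x_u) > r_d and d_L(W_j, x_v) > r_s} has the binomial distribution Bin(m₁ + m₂, 1 − 2r_s). -/

import Mathlib

open MeasureTheory

/-- The circular distance on `[0,1]`. -/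
noncomputable def dL (x y : ℝ) : ℝ := min |x - y| (1 - |x - y|)

/-- The uniform (probability) measure on `[0,1]`. -/
noncomputable def unif : Measure ℝ := volume.restrict (Set.Icc (0 : ℝ) 1)

/-- The binomial probability `Bin(m,p)` of the value `k`. -/
noncomputable def binomPMF (m : ℕ) (p : ℝ) (k : ℕ) : ENNReal :=
  ENNReal.ofReal ((m.choose k : ℝ) * p ^ k * (1 - p) ^ (m - k))

/-!
A point at circular distance more than `r_s` from `x_u` is at distance more than
`r_s - r_d > r_d` from `x_v`, by the triangle inequality for `d_L` and `d_L(x_u, x_v) ≤ r_d`;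
symmetrically for the second cluster. So each of the `m₁ + m₂` independent uniform points
satisfies its Motif-4 condition exactly when it avoids an arc of length `2 r_s`, an event of
probability `1 - 2 r_s`, and the number of successes among independent events of common
probability `p` is `Bin(m, p)`.
-/

open Set

lemma dL_comm (x y : ℝ) : dL x y = dL y x := by
  rw [dL, dL, abs_sub_comm]

lemma abs_sub_add_abs_sub_add_abs_sub_le_two {x y z : ℝ} (hx : x ∈ Icc (0 : ℝ) 1)
    (hy : y ∈ Icc (0 : ℝ) 1) (hz : z ∈ Icc (0 : ℝ) 1) : |x - y| + |y - z| + |x - z| ≤ 2 := by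
  obtain ⟨_, _⟩ := hx; obtain ⟨_, _⟩ := hy; obtain ⟨_, _⟩ := hz
  rcases abs_cases (x - y) with ⟨_, _⟩ | ⟨_, _⟩ <;>
    rcases abs_cases (y - z) with ⟨_, _⟩ | ⟨_, _⟩ <;>
    rcases abs_cases (x - z) with ⟨_, _⟩ | ⟨_, _⟩ <;> linarith

lemma dL_triangle {x y z : ℝ} (hx : x ∈ Icc (0 : ℝ) 1) (hy : y ∈ Icc (0 : ℝ) 1)
    (hz : z ∈ Icc (0 : ℝ) 1) : dL x z ≤ dL x y + dL y z := by
  have hxz := abs_sub_le x y z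
  have hxy := abs_sub_le x z y
  have hyz := abs_sub_le y x z
  have hsum := abs_sub_add_abs_sub_add_abs_sub_le_two hx hy hz
  rw [abs_sub_comm z y] at hxy
  rw [abs_sub_comm y x] at hyz
  unfold dL
  rcases min_cases |x - y| (1 - |x - y|) with ⟨h₁, -⟩ | ⟨h₁, -⟩ <;>
    rcases min_cases |y - z| (1 - |y - z|) with ⟨h₂, -⟩ | ⟨h₂, -⟩ <;> rw [h₁, h₂] <;>
    first
    | exact min_le_of_left_le (by linarith)
    | exact min_le_of_right_le (by linarith)

lemma measurable_dL_left (a : ℝ) : Measurable fun z => dL z a := by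
  unfold dL; fun_prop

lemma setOf_lt_dL (a r : ℝ) :
    {z | r < dL z a} = Ioo (a + r) (a + 1 - r) ∪ Ioo (a - 1 + r) (a - r) := by
  ext z
  simp only [mem_ofPred_eq, dL, lt_min_iff, mem_union, mem_Ioo]
  rcases abs_cases (z - a) with ⟨h, _⟩ | ⟨h, _⟩ <;> rw [h] <;> constructor
  · exact fun h => Or.inl ⟨by linarith, by linarith⟩
  · rintro (h | h) <;> exact ⟨by linarith, by linarith⟩
  · exact fun h => Or.inr ⟨by linarith, by linarith⟩
  · rintro (h | h) <;> exact ⟨by linarith, by linarith⟩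

instance : IsProbabilityMeasure unif :=
  ⟨by rw [unif, Measure.restrict_apply_univ, Real.volume_Icc]; norm_num⟩

lemma unif_eq_restrict_Ioo : unif = volume.restrict (Ioo 0 1) :=
  (Measure.restrict_congr_set Ioo_ae_eq_Icc).symm

lemma unif_setOf_lt_dL {a r : ℝ} (ha : a ∈ Icc (0 : ℝ) 1) (hr : 0 ≤ r) (h2r : 2 * r ≤ 1) :
    unif {z | r < dL z a} = ENNReal.ofReal (1 - 2 * r) := by
  obtain ⟨ha₀, ha₁⟩ := ha
  have hdisj : Disjoint (Ioo (a + r) (a + 1 - r) ∩ Ioo 0 1) (Ioo (a - 1 + r) (a - r) ∩ Ioo 0 1) :=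
    disjoint_left.2 fun z h₁ h₂ => by linarith [h₁.1.1, h₂.1.2]
  rw [unif_eq_restrict_Ioo, Measure.restrict_apply (measurableSet_lt measurable_const
    (measurable_dL_left a)), setOf_lt_dL, union_inter_distrib_right,
    measure_union hdisj (measurableSet_Ioo.inter measurableSet_Ioo), Ioo_inter_Ioo, Ioo_inter_Ioo,
    Real.volume_Ioo, Real.volume_Ioo]
  have hlength : max (min (a + 1 - r) 1 - max (a + r) 0) 0
      + max (min (a - r) 1 - max (a - 1 + r) 0) 0 = 1 - 2 * r := by
    simp only [max_def, min_def]; split_ifs <;> linarith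
  rw [← hlength, ENNReal.ofReal_add (le_max_right _ _) (le_max_right _ _)]
  simp

lemma unif_setOf_lt_dL_and_lt_dL {a b rs rd : ℝ} (ha : a ∈ Icc (0 : ℝ) 1)
    (hb : b ∈ Icc (0 : ℝ) 1) (hrd : 0 ≤ rd) (hrs : 2 * rd < rs) (hab : dL a b ≤ rd)
    (h2rs : 2 * rs ≤ 1) :
    unif {z | rs < dL z a ∧ rd < dL z b} = ENNReal.ofReal (1 - 2 * rs) := by
  have hae : {z | rs < dL z a ∧ rd < dL z b} =ᵐ[unif] {z | rs < dL z a} := by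
    refine Filter.eventuallyEq_set.2 ((ae_restrict_mem measurableSet_Icc).mono fun z hz => ?_)
    have := dL_triangle hz hb ha
    rw [dL_comm b a] at this
    show rs < dL z a ∧ rd < dL z b ↔ rs < dL z a
    exact ⟨And.left, fun h => ⟨h, by linarith⟩⟩
  rw [measure_congr hae, unif_setOf_lt_dL ha (by linarith) h2rs]

section Binomial

open Finset

variable {ι : Type*} [Fintype ι] {α : ι → Type*} {S : ∀ i, Set (α i)}

open scoped Classical in
lemma mem_pi_ite_compl_iff {ω : ∀ i, α i} {T : Finset ι} :
    ω ∈ Set.univ.pi (fun i => if i ∈ T then S i else (S i)ᶜ)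
      ↔ ({i | ω i ∈ S i} : Finset ι) = T := by
  simp only [Set.mem_pi, true_implies, Finset.ext_iff, mem_filter, mem_univ]
  refine forall_congr' fun i => ?_
  by_cases hi : i ∈ T <;> simp [hi]

open scoped Classical in
lemma setOf_card_filter_mem_eq_biUnion (k : ℕ) :
    {ω : ∀ i, α i | #{i | ω i ∈ S i} = k}
      = ⋃ T ∈ powersetCard k (univ : Finset ι),
          Set.univ.pi fun i => if i ∈ T then S i else (S i)ᶜ := by
  ext ω
  simp only [mem_ofPred_eq, Set.mem_iUnion, mem_powersetCard, Finset.subset_univ, true_and,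
    exists_prop, mem_pi_ite_compl_iff]
  exact ⟨fun h => ⟨_, h, rfl⟩, by rintro ⟨T, hT, rfl⟩; exact hT⟩

variable [∀ i, MeasurableSpace (α i)] {μ : ∀ i, Measure (α i)} [∀ i, IsProbabilityMeasure (μ i)]
  {p : ℝ}

open scoped Classical in
lemma pi_pi_ite_compl (hS : ∀ i, MeasurableSet (S i)) (hμS : ∀ i, μ i (S i) = ENNReal.ofReal p)
    (hp : 0 ≤ p) (T : Finset ι) :
    Measure.pi μ (Set.univ.pi fun i => if i ∈ T then S i else (S i)ᶜ)
      = ENNReal.ofReal p ^ #T * ENNReal.ofReal (1 - p) ^ (Fintype.card ι - #T) := by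
  have hμSc : ∀ i, μ i (S i)ᶜ = ENNReal.ofReal (1 - p) := fun i => by
    rw [prob_compl_eq_one_sub (hS i), hμS, ← ENNReal.ofReal_one, ENNReal.ofReal_sub _ hp]
  rw [Measure.pi_pi, ← prod_mul_prod_compl T,
    prod_eq_pow_card fun i hi => by rw [if_pos hi, hμS],
    prod_eq_pow_card fun i hi => by rw [if_neg (mem_compl.1 hi), hμSc], card_compl]

open scoped Classical in
theorem pi_card_filter_mem_eq_binomPMF (hS : ∀ i, MeasurableSet (S i))
    (hμS : ∀ i, μ i (S i) = ENNReal.ofReal p) (hp₀ : 0 ≤ p) (hp₁ : p ≤ 1) (k : ℕ) :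
    Measure.pi μ {ω | #{i | ω i ∈ S i} = k} = binomPMF (Fintype.card ι) p k := by
  have hdisj : (powersetCard k (univ : Finset ι) : Set (Finset ι)).PairwiseDisjoint
      fun T => Set.univ.pi fun i => if i ∈ T then S i else (S i)ᶜ :=
    fun T₁ _ T₂ _ hne => Set.disjoint_left.2 fun ω h₁ h₂ =>
      hne ((mem_pi_ite_compl_iff.1 h₁).symm.trans (mem_pi_ite_compl_iff.1 h₂))
  have hmeas (T : Finset ι) :
      MeasurableSet (Set.univ.pi fun i => if i ∈ T then S i else (S i)ᶜ) :=
    .univ_pi fun i => by split_ifs; exacts [hS i, (hS i).compl]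
  rw [setOf_card_filter_mem_eq_biUnion, measure_biUnion_finset hdisj fun T _ => hmeas T,
    sum_congr rfl fun T hT => by rw [pi_pi_ite_compl hS hμS hp₀, (mem_powersetCard.1 hT).2],
    sum_const, card_powersetCard, card_univ, nsmul_eq_mul, binomPMF,
    ENNReal.ofReal_mul (by positivity), ENNReal.ofReal_mul (by positivity),
    ENNReal.ofReal_pow hp₀, ENNReal.ofReal_pow (by linarith), ENNReal.ofReal_natCast, mul_assoc]

end Binomial

open Finset in
open scoped Classical in
theorem prod_pi_card_filter_add_card_filter_eq_binomPMF {ι κ : Type*} [Fintype ι] [Fintype κ]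
    {X : ι ⊕ κ → Type*} [∀ i, MeasurableSpace (X i)] {μ : ∀ i, Measure (X i)}
    [∀ i, IsProbabilityMeasure (μ i)] {S : ∀ i, Set (X i)} {p : ℝ}
    (hS : ∀ i, MeasurableSet (S i)) (hμS : ∀ i, μ i (S i) = ENNReal.ofReal p) (hp₀ : 0 ≤ p)
    (hp₁ : p ≤ 1) (k : ℕ) :
    ((Measure.pi fun i => μ (.inl i)).prod (Measure.pi fun j => μ (.inr j)))
        {ω | #{i | ω.1 i ∈ S (.inl i)} + #{j | ω.2 j ∈ S (.inr j)} = k}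
      = binomPMF (Fintype.card ι + Fintype.card κ) p k := by
  rw [← (measurePreserving_sumPiEquivProdPi μ).measure_preimage_equiv, ← Fintype.card_sum,
    ← pi_card_filter_mem_eq_binomPMF hS hμS hp₀ hp₁ k]
  congr 1
  ext ω
  simp only [card_filter, Fintype.sum_sum_type]
  rfl

theorem gbm_motif4_count_diff_general (xu xv rs rd : ℝ) (m₁ m₂ : ℕ)
    (hxu : xu ∈ Set.Icc (0 : ℝ) 1) (hxv : xv ∈ Set.Icc (0 : ℝ) 1)
    (hrd : 0 ≤ rd) (hrs2 : 2 * rd < rs)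
    (hx : dL xu xv ≤ rd) (hx1 : 2 * rs ≤ 1) :
    ∀ k : ℕ,
      ((Measure.pi fun _ : Fin m₁ => unif).prod (Measure.pi fun _ : Fin m₂ => unif))
        {ω | (Finset.univ.filter fun i : Fin m₁ =>
                rs < dL (ω.1 i) xu ∧ rd < dL (ω.1 i) xv).card
            + (Finset.univ.filter fun j : Fin m₂ =>
                rd < dL (ω.2 j) xu ∧ rs < dL (ω.2 j) xv).card = k}
        = binomPMF (m₁ + m₂) (1 - 2 * rs) k := by
  intro k
  let S : Fin m₁ ⊕ Fin m₂ → Set ℝ := Sum.elim (fun _ => {z | rs < dL z xu ∧ rd < dL z xv})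
    (fun _ => {z | rd < dL z xu ∧ rs < dL z xv})
  have hS (i) : MeasurableSet (S i) := by
    cases i <;> exact (measurableSet_lt measurable_const (measurable_dL_left _)).inter
      (measurableSet_lt measurable_const (measurable_dL_left _))
  have hμS (i) : unif (S i) = ENNReal.ofReal (1 - 2 * rs) := by
    cases i
    · exact unif_setOf_lt_dL_and_lt_dL hxu hxv hrd hrs2 hx hx1
    · show unif {z | rd < dL z xu ∧ rs < dL z xv} = _
      simpa only [and_comm] using
        unif_setOf_lt_dL_and_lt_dL hxv hxu hrd hrs2 (dL_comm xv xu ▸ hx) hx1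
  convert prod_pi_card_filter_add_card_filter_eq_binomPMF (μ := fun _ => unif) hS hμS
    (by linarith) (by linarith) k using 1
  · congr!
  · simp only [Fintype.card_fin]

/-- Lemma 7 of the paper: for two different-cluster vertices at
circular distance `x ≤ r_d` with `r_s > 2r_d` and `2r_s ≤ 1`, the total Motif-4
count among the `m₁ + m₂` other points is `Bin(m₁ + m₂, 1 − 2r_s)`-distributed. -/
theorem gbm_motif4_count_diff (xu xv rs rd : ℝ) (m₁ m₂ : ℕ)
    (hxu : xu ∈ Set.Icc (0 : ℝ) 1) (hxv : xv ∈ Set.Icc (0 : ℝ) 1)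
    (hrd : 0 ≤ rd) (hrsd : rd ≤ rs) (hrs2 : 2 * rd < rs)
    (hx : dL xu xv ≤ rd) (hx1 : 2 * rs ≤ 1) :
    ∀ k : ℕ,
      ((Measure.pi fun _ : Fin m₁ => unif).prod (Measure.pi fun _ : Fin m₂ => unif))
        {ω | (Finset.univ.filter fun i : Fin m₁ =>
                rs < dL (ω.1 i) xu ∧ rd < dL (ω.1 i) xv).card
            + (Finset.univ.filter fun j : Fin m₂ =>
                rd < dL (ω.2 j) xu ∧ rs < dL (ω.2 j) xv).card = k}
        = binomPMF (m₁ + m₂) (1 - 2 * rs) k :=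
  gbm_motif4_count_diff_general xu xv rs rd m₁ m₂ hxu hxv hrd hrs2 hx hx1
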